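/- Let d ≥ 3, n, k be positive integers with k ≤ n^(d/(d+1)) / (d·log₂(n+1))^(1/(d+1)). Then (binom(n,k) + 1)^(k^d) < 2^(n^d). Consequently, the map sending a binary n^{×d}-hypermatrix A to S_k^p(A) (the entrywise sum of all binom(n,k) principal k^{×d}-subhypermatrices) is not injective. -/

import Mathlib

/-! Pigeonhole: every entry of `S_k^p(A)` lies in `[0, C(n,k)]`, so `S_k^p` takes at most
`(C(n,k) + 1)^(k^d)` values on the `2^(n^d)` binary hypermatrices. The counting inequality
follows from `C(n,k) + 1 ≤ (n+1)^k` and the bound on `k`, which after raising to the power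
`d + 1` reads `k^(d+1) · d · log₂(n+1) ≤ n^d`; since `d > 1` this gives
`(n+1)^(k^(d+1)) < 2^(n^d)`. -/

/-- The entrywise sum of all principal `k × ⋯ × k` subhypermatrices of a binary
`n × ⋯ × n` `d`-dimensional hypermatrix `A` (the same index set deleted in
every coordinate direction). -/
def Skp (d n k : ℕ) (A : (Fin d → Fin n) → Bool) : (Fin d → Fin k) → ℕ :=
  fun u => ∑ s : {s : Finset (Fin n) // s.card = k},
    (A (fun j => (s.1.orderIsoOfFin s.2 (u j) : Fin n))).toNat

theorem not_injective_of_forall_le {α ι : Type*} [Fintype α] [Fintype ι] [DecidableEq ι]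
    {f : α → ι → ℕ} {m : ℕ} (hf : ∀ a i, f a i ≤ m)
    (hcard : (m + 1) ^ Fintype.card ι < Fintype.card α) : ¬ Function.Injective f := by
  intro hinj
  let g : α → ι → Fin (m + 1) := fun a i => ⟨f a i, Nat.lt_succ_of_le (hf a i)⟩
  have hg : Function.Injective g := fun a b hab =>
    hinj (funext fun i => congrArg Fin.val (congrFun hab i))
  have := Fintype.card_le_of_injective g hg
  simp only [Fintype.card_fun, Fintype.card_fin] at this
  omega

theorem Skp_le_choose (d n k : ℕ) (A : (Fin d → Fin n) → Bool) (u : Fin d → Fin k) :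
    Skp d n k A u ≤ n.choose k := by
  calc Skp d n k A u ≤ ∑ _s : {s : Finset (Fin n) // s.card = k}, 1 :=
        Finset.sum_le_sum fun s _ => Bool.toNat_le _
    _ = n.choose k := by simp

theorem not_injective_Skp (d n k : ℕ) (h : (n.choose k + 1) ^ (k ^ d) < 2 ^ (n ^ d)) :
    ¬ Function.Injective (Skp d n k) :=
  not_injective_of_forall_le (Skp_le_choose d n k) (by simpa using h)

theorem pow_lt_two_pow_of_mul_logb_lt {a b c : ℕ} (ha : 0 < a)
    (h : (c : ℝ) * Real.logb 2 a < b) : a ^ c < 2 ^ b := by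
  have hlog : Real.logb 2 ((a : ℝ) ^ c) < Real.logb 2 ((2 : ℝ) ^ b) := by
    rwa [Real.logb_pow, Real.logb_pow, Real.logb_self_eq_one one_lt_two, mul_one]
  exact_mod_cast (Real.logb_lt_logb_iff one_lt_two (by positivity) (by positivity)).1 hlog

theorem pow_succ_mul_le_of_le_rpow_div_rpow {x y c : ℝ} {m : ℕ} (hx : 0 ≤ x) (hy : 0 ≤ y)
    (hc : 0 < c) (h : x ≤ y ^ ((m : ℝ) / (m + 1)) / c ^ (1 / ((m : ℝ) + 1))) :
    x ^ (m + 1) * c ≤ y ^ m := by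
  have hroot : ∀ z : ℝ, 0 ≤ z → (z ^ (1 / ((m : ℝ) + 1))) ^ (m + 1) = z := fun z hz => by
    simpa using Real.rpow_inv_natCast_pow hz m.succ_ne_zero
  rw [le_div_iff₀ (by positivity)] at h
  calc x ^ (m + 1) * c = (x * c ^ (1 / ((m : ℝ) + 1))) ^ (m + 1) := by
        rw [mul_pow, hroot c hc.le]
    _ ≤ (y ^ ((m : ℝ) / (m + 1))) ^ (m + 1) := pow_le_pow_left₀ (by positivity) h _
    _ = y ^ m := by
        rw [div_eq_mul_one_div, Real.rpow_mul hy, Real.rpow_natCast, hroot _ (by positivity)]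

theorem choose_add_one_le_add_one_pow (n : ℕ) {k : ℕ} (hk : k ≠ 0) :
    n.choose k + 1 ≤ (n + 1) ^ k :=
  (Nat.choose_le_pow n k).trans_lt (Nat.pow_lt_pow_left n.lt_succ_self hk)

theorem stmt1 (d n k : ℕ) (hd : 3 ≤ d) (hn : 0 < n) (hk : 0 < k)
    (hkb : (k : ℝ) ≤ (n : ℝ) ^ ((d : ℝ) / ((d : ℝ) + 1)) /
      ((d : ℝ) * Real.logb 2 ((n : ℝ) + 1)) ^ (1 / ((d : ℝ) + 1))) :
    ((Nat.choose n k) + 1) ^ (k ^ d) < 2 ^ (n ^ d) ∧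
      ¬ Function.Injective (Skp d n k) := by
  set L := Real.logb 2 ((n : ℝ) + 1)
  have hL : 0 < L := Real.logb_pos one_lt_two (by norm_cast; omega)
  have hd_one : (1 : ℝ) < d := by norm_cast; omega
  have hbound : (k : ℝ) ^ (d + 1) * (d * L) ≤ (n : ℝ) ^ d :=
    pow_succ_mul_le_of_le_rpow_div_rpow (by positivity) (by positivity) (by positivity) hkb
  have hlog : ((k ^ (d + 1) : ℕ) : ℝ) * Real.logb 2 ((n + 1 : ℕ) : ℝ) < ((n ^ d : ℕ) : ℝ) := by
    push_cast
    calc (k : ℝ) ^ (d + 1) * L < (k : ℝ) ^ (d + 1) * (d * L) := by gcongr; exact lt_mul_of_one_lt_left hL hd_one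
      _ ≤ (n : ℝ) ^ d := hbound
  have hcount : (n.choose k + 1) ^ (k ^ d) < 2 ^ (n ^ d) :=
    calc (n.choose k + 1) ^ (k ^ d) ≤ ((n + 1) ^ k) ^ (k ^ d) :=
          Nat.pow_le_pow_left (choose_add_one_le_add_one_pow n hk.ne') _
      _ = (n + 1) ^ (k ^ (d + 1)) := by rw [← pow_mul, pow_succ', mul_comm]
      _ < 2 ^ (n ^ d) := pow_lt_two_pow_of_mul_logb_lt n.succ_pos hlog
  exact ⟨hcount, not_injective_Skp d n k hcount⟩
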